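/- arXiv:2511.22976 — 2 statements merged into one kernel-verified Lean document; each statement's English description precedes it below -/
import Mathlib

section
/- Let μ and ν be Borel probability measures on the unit sphere S of ℂⁿ and let π be any coupling of μ and ν (a Borel probability measure on S × S with marginals μ and ν). Then the trace distance of the realized states satisfies d_TR(Λ(μ), Λ(ν)) ≤ ∫∫_{S×S} d_FS(ψ, φ) dπ(ψ, φ), where d_FS(ψ, φ) = arccos|⟨ψ, φ⟩|. Consequently the map Λ is 1-Lipschitz from the space of probability measures on S equipped with the 1-Wasserstein distance induced by d_FS to the density matrices equipped with the trace distance. -/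
open MeasureTheory Matrix
open scoped ENNReal ComplexOrder Classical

noncomputable section

instance (n : ℕ) : MeasurableSpace (EuclideanSpace ℂ (Fin n)) := borel _
instance (n : ℕ) : BorelSpace (EuclideanSpace ℂ (Fin n)) := ⟨rfl⟩

/-- `ℂⁿ` as a Euclidean (Hilbert) space. -/
abbrev Hn (n : ℕ) := EuclideanSpace ℂ (Fin n)

/-- The unit sphere of `ℂⁿ`, identified with the set of pure states. -/
abbrev Sph (n : ℕ) := Metric.sphere (0 : Hn n) 1

/-- The rank-one matrix `|ψ⟩⟨ψ| = ψ ψ†`. -/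
def outer {n : ℕ} (ψ : Fin n → ℂ) : Matrix (Fin n) (Fin n) ℂ :=
  Matrix.of fun i j => ψ i * (starRingEnd ℂ) (ψ j)

/-- The rank-one matrix `|x⟩⟨y| = x y†`. -/
def outer2 {n : ℕ} (x y : Fin n → ℂ) : Matrix (Fin n) (Fin n) ℂ :=
  Matrix.of fun i j => x i * (starRingEnd ℂ) (y j)

/-- The standard inner product on `ℂⁿ`, antilinear in the first argument. -/
def ip {n : ℕ} (x y : Fin n → ℂ) : ℂ := ∑ i, (starRingEnd ℂ) (x i) * y i

/-- The norm on `ℂⁿ` induced by `ip`. -/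
def nrm {n : ℕ} (x : Fin n → ℂ) : ℝ := Real.sqrt (ip x x).re

/-- `Λ(μ) = ∫ |ψ⟩⟨ψ| dμ(ψ)`, defined entrywise. -/
def Lambda {n : ℕ} (μ : Measure (Sph n)) : Matrix (Fin n) (Fin n) ℂ :=
  Matrix.of fun i j => ∫ ψ, ((ψ : Hn n) i * (starRingEnd ℂ) ((ψ : Hn n) j)) ∂μ

/-- Kullback–Leibler divergence `∫ log(dμ/dν) dμ` if `μ ≪ ν` (with value `⊤` if the
integral does not exist), and `⊤` otherwise. -/
def KLdiv {X : Type*} [MeasurableSpace X] (μ ν : Measure X) : EReal :=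
  if μ ≪ ν ∧ Integrable (llr μ ν) μ then ((∫ x, llr μ ν x ∂μ : ℝ) : EReal) else ⊤

/-- The positive square root of a positive semidefinite matrix (junk value `0` otherwise). -/
def msqrt {n : ℕ} (A : Matrix (Fin n) (Fin n) ℂ) : Matrix (Fin n) (Fin n) ℂ :=
  if h : A.PosSemidef then
    (h.1.eigenvectorUnitary : Matrix (Fin n) (Fin n) ℂ) *
      diagonal ((↑) ∘ Real.sqrt ∘ h.1.eigenvalues) *
      (star h.1.eigenvectorUnitary : Matrix (Fin n) (Fin n) ℂ) else 0

/-- `f` applied to a Hermitian matrix via the continuous functional calculus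
(junk value `0` on non-Hermitian matrices). -/
def mcfc {n : ℕ} (f : ℝ → ℝ) (A : Matrix (Fin n) (Fin n) ℂ) : Matrix (Fin n) (Fin n) ℂ :=
  if h : A.IsHermitian then h.cfc f else 0

/-- The matrix logarithm, via the continuous functional calculus. -/
def mlog {n : ℕ} (A : Matrix (Fin n) (Fin n) ℂ) : Matrix (Fin n) (Fin n) ℂ :=
  mcfc Real.log A

/-- The Belavkin–Staszewski relative entropy `Tr[ρ log(√ρ σ⁻¹ √ρ)]`. -/
def DBS {n : ℕ} (ρ σ : Matrix (Fin n) (Fin n) ℂ) : ℝ :=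
  ((ρ * mlog (msqrt ρ * σ⁻¹ * msqrt ρ)).trace).re

/-- The trace distance `½ Tr[√((A−B)†(A−B))]`. -/
def traceDist {n : ℕ} (A B : Matrix (Fin n) (Fin n) ℂ) : ℝ :=
  (1 / 2) * ((msqrt ((A - B)ᴴ * (A - B))).trace).re

/-- The Fubini–Study distance `arccos |⟨ψ, φ⟩|` between unit vectors. -/
def dFS {n : ℕ} (ψ φ : Hn n) : ℝ := Real.arccos ‖(inner ℂ ψ φ : ℂ)‖

/-- The (closed) support of a measure. -/
def msupport {X : Type*} [TopologicalSpace X] [MeasurableSpace X] (μ : Measure X) : Set X :=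
  {x | ∀ U : Set X, IsOpen U → x ∈ U → μ U ≠ 0}

namespace Aux
variable {n : ℕ} {M : Matrix (Fin n) (Fin n) ℂ}
variable {n : ℕ} {M : Matrix (Fin n) (Fin n) ℂ}

lemma star_mul_self_eu (hM : M.IsHermitian) :
    (star (hM.eigenvectorUnitary : Matrix (Fin n) (Fin n) ℂ)) * hM.eigenvectorUnitary = 1 :=
  Unitary.coe_star_mul_self _

lemma mul_star_self_eu (hM : M.IsHermitian) :
    (hM.eigenvectorUnitary : Matrix (Fin n) (Fin n) ℂ) * star (hM.eigenvectorUnitary : Matrix (Fin n) (Fin n) ℂ) = 1 :=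
  Unitary.coe_mul_star_self _

lemma cfc_mul (hM : M.IsHermitian) (f g : ℝ → ℝ) :
    hM.cfc f * hM.cfc g = hM.cfc fun x => f x * g x := by
  simp only [Matrix.IsHermitian.cfc]
  set V := (hM.eigenvectorUnitary : Matrix (Fin n) (Fin n) ℂ) with hV
  have h1 : star V * V = 1 := star_mul_self_eu hM
  calc V * diagonal (RCLike.ofReal ∘ f ∘ hM.eigenvalues) * star V *
        (V * diagonal (RCLike.ofReal ∘ g ∘ hM.eigenvalues) * star V)
      = V * (diagonal (RCLike.ofReal ∘ f ∘ hM.eigenvalues) * ((star V * V) *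
          (diagonal (RCLike.ofReal ∘ g ∘ hM.eigenvalues) * star V))) := by
        simp only [Matrix.mul_assoc]
    _ = V * (diagonal (RCLike.ofReal ∘ f ∘ hM.eigenvalues) *
          diagonal (RCLike.ofReal ∘ g ∘ hM.eigenvalues)) * star V := by
        rw [h1, one_mul]; simp only [Matrix.mul_assoc]
    _ = V * diagonal (RCLike.ofReal ∘ (fun x => f x * g x) ∘ hM.eigenvalues) * star V := by
        have h2 : (fun i => (RCLike.ofReal ∘ f ∘ hM.eigenvalues) i * (RCLike.ofReal ∘ g ∘ hM.eigenvalues) i) =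
            (RCLike.ofReal ∘ (fun x => f x * g x) ∘ hM.eigenvalues : Fin n → ℂ) := by
          funext i; simp [Function.comp]
        rw [diagonal_mul_diagonal, h2]

lemma cfc_isHermitian (hM : M.IsHermitian) (f : ℝ → ℝ) : (hM.cfc f).IsHermitian := by
  show _ᴴ = _
  simp only [Matrix.IsHermitian.cfc, Unitary.conjStarAlgAut_apply, Matrix.star_eq_conjTranspose, conjTranspose_mul,
    conjTranspose_conjTranspose, diagonal_conjTranspose, Matrix.mul_assoc]
  have : star (RCLike.ofReal ∘ f ∘ hM.eigenvalues) = (RCLike.ofReal ∘ f ∘ hM.eigenvalues : Fin n → ℂ) := by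
    funext i
    simp [Function.comp, Pi.star_apply, Complex.star_def, Complex.conj_ofReal]
  rw [this]

lemma cfc_trace (hM : M.IsHermitian) (f : ℝ → ℝ) :
    (hM.cfc f).trace = ∑ i, (f (hM.eigenvalues i) : ℂ) := by
  rw [Matrix.IsHermitian.cfc, Unitary.conjStarAlgAut_apply, Matrix.trace_mul_comm, ← Matrix.mul_assoc,
    star_mul_self_eu hM, one_mul, Matrix.trace_diagonal]
  rfl

lemma cfc_posSemidef (hM : M.IsHermitian) {f : ℝ → ℝ} (hf : ∀ x, 0 ≤ f x) :
    (hM.cfc f).PosSemidef := by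
  have h := cfc_mul hM (fun x => Real.sqrt (f x)) (fun x => Real.sqrt (f x))
  have hsq : (fun x => Real.sqrt (f x) * Real.sqrt (f x)) = f :=
    funext fun x => Real.mul_self_sqrt (hf x)
  rw [hsq] at h
  rw [← h]
  nth_rewrite 1 [← cfc_isHermitian hM (fun x => Real.sqrt (f x))]
  exact Matrix.posSemidef_conjTranspose_mul_self _

lemma cfc_id (hM : M.IsHermitian) : hM.cfc (fun x => x) = M := by
  conv_rhs => rw [hM.spectral_theorem]
  rfl

lemma cfc_one (hM : M.IsHermitian) : hM.cfc (fun _ => 1) = 1 := by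
  rw [Matrix.IsHermitian.cfc]
  have : diagonal (RCLike.ofReal ∘ (fun _ => (1:ℝ)) ∘ hM.eigenvalues) = (1 : Matrix (Fin n) (Fin n) ℂ) := by
    ext i j
    simp [Matrix.diagonal_apply, Matrix.one_apply, Function.comp]
  rw [Unitary.conjStarAlgAut_apply, this, mul_one, mul_star_self_eu hM]


def sgn (x : ℝ) : ℝ := if x < 0 then -1 else 1

lemma sgn_mul_self (x : ℝ) : sgn x * sgn x = 1 := by
  unfold sgn; split <;> norm_num

lemma sgn_mul (x : ℝ) : sgn x * x = |x| := by
  unfold sgn; split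
  · rw [abs_of_neg (by assumption)]; ring
  · rw [abs_of_nonneg (le_of_not_gt (by assumption))]; ring

lemma exists_unitary (hM : M.IsHermitian) :
    ∃ U : Matrix (Fin n) (Fin n) ℂ, Uᴴ * U = 1 ∧ msqrt (Mᴴ * M) = U * M := by
  refine ⟨hM.cfc sgn, ?_, ?_⟩
  · rw [(cfc_isHermitian hM sgn : _ = _), cfc_mul]
    have h1 : (fun x => sgn x * sgn x) = fun _ : ℝ => (1:ℝ) := funext sgn_mul_self
    rw [h1, cfc_one]
  · have hMM : (Mᴴ * M).PosSemidef := Matrix.posSemidef_conjTranspose_mul_self M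
    have habs : (hM.cfc fun x => |x|).PosSemidef := cfc_posSemidef hM fun x => abs_nonneg x
    have habsfun : (fun x : ℝ => sgn x * x) = fun x => |x| := funext sgn_mul
    have hUM : hM.cfc sgn * M = hM.cfc fun x => |x| := by
      have e : hM.cfc sgn * M = hM.cfc sgn * hM.cfc (fun x => x) := by rw [cfc_id]
      rw [e, cfc_mul, habsfun]
    have hsq : (hM.cfc fun x => |x|) ^ 2 = Mᴴ * M := by
      have h2 : (fun x : ℝ => |x| * |x|) = fun x => x * x := funext fun x => abs_mul_abs_self x
      calc (hM.cfc fun x => |x|) ^ 2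
          = hM.cfc (fun x => x * x) := by rw [pow_two, cfc_mul, h2]
        _ = hM.cfc (fun x => x) * hM.cfc (fun x => x) := (cfc_mul hM _ _).symm
        _ = M * M := by rw [cfc_id]
        _ = Mᴴ * M := by rw [hM]
    have hsq' : msqrt (Mᴴ * M) = hM.cfc fun x => |x| := by
      unfold msqrt
      rw [dif_pos hMM]
      have e1 : (hMM.1.eigenvectorUnitary : Matrix (Fin n) (Fin n) ℂ) *
          diagonal ((↑) ∘ Real.sqrt ∘ hMM.1.eigenvalues) *
          (star hMM.1.eigenvectorUnitary : Matrix (Fin n) (Fin n) ℂ) = cfc Real.sqrt (Mᴴ * M) := by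
        rw [Matrix.IsHermitian.cfc_eq hMM.1, Matrix.IsHermitian.cfc, Unitary.conjStarAlgAut_apply]
        rfl
      rw [e1, ← Matrix.IsHermitian.cfc_eq hM]
      have e2 : Mᴴ * M = cfc (fun x : ℝ => x * x) M := by
        rw [_root_.cfc_mul (fun x : ℝ => x) (fun x : ℝ => x) M,
          cfc_id' ℝ M hM.isSelfAdjoint, hM]
      rw [e2, ← cfc_comp Real.sqrt (fun x : ℝ => x * x) M]
      congr 1
      funext x
      exact Real.sqrt_mul_self_eq_abs x
    rw [hsq']
    exact hUM.symm


lemma sqrt_le_arccos {r : ℝ} (h0 : 0 ≤ r) (h1 : r ≤ 1) :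
    Real.sqrt (2 - 2 * r) ≤ Real.arccos r := by
  set t := Real.arccos r with ht
  have ht0 : 0 ≤ t := Real.arccos_nonneg r
  have htpi : t ≤ Real.pi := Real.arccos_le_pi r
  have hcos : Real.cos t = r := Real.cos_arccos (by linarith) h1
  have hs0 : 0 ≤ Real.sin (t / 2) :=
    Real.sin_nonneg_of_nonneg_of_le_pi (by linarith) (by linarith)
  have hsle : Real.sin (t / 2) ≤ t / 2 := Real.sin_le (by linarith)
  have hsq : Real.sin (t / 2) ^ 2 = (1 - r) / 2 := by
    have := Real.abs_sin_half t
    have h2 : Real.sin (t/2) ^ 2 = |Real.sin (t/2)| ^ 2 := (sq_abs _).symm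
    rw [h2, this, Real.sq_sqrt (by linarith), hcos]
  have h4 : 2 - 2 * r = (2 * Real.sin (t / 2)) ^ 2 := by
    have : (2 * Real.sin (t / 2)) ^ 2 = 4 * Real.sin (t/2) ^ 2 := by ring
    rw [this, hsq]; ring
  rw [h4, Real.sqrt_sq (by positivity)]
  linarith


def T (U : Matrix (Fin n) (Fin n) ℂ) (x : Hn n) : Hn n := WithLp.toLp 2 (U.mulVec x)

lemma inner_eq_dot (x y : Hn n) :
    (inner ℂ x y : ℂ) = dotProduct (star (x : Fin n → ℂ)) (y : Fin n → ℂ) := by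
  simp [PiLp.inner_apply, RCLike.inner_apply, dotProduct, mul_comm]

lemma inner_T_T (U : Matrix (Fin n) (Fin n) ℂ) (hU : Uᴴ * U = 1) (x : Hn n) :
    (inner ℂ (T U x) (T U x) : ℂ) = inner ℂ x x := by
  rw [inner_eq_dot, inner_eq_dot]
  show dotProduct (star (U.mulVec x)) (U.mulVec x) = _
  rw [star_mulVec, dotProduct_mulVec, vecMul_vecMul, hU, vecMul_one]

lemma norm_T (U : Matrix (Fin n) (Fin n) ℂ) (hU : Uᴴ * U = 1) (x : Hn n) :
    ‖T U x‖ = ‖x‖ := by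
  have h := congrArg Complex.re (inner_T_T U hU x)
  have h1 : ‖T U x‖ ^ 2 = ‖x‖ ^ 2 := by
    rw [← @inner_self_eq_norm_sq ℂ, ← @inner_self_eq_norm_sq ℂ]
    exact h
  calc ‖T U x‖ = Real.sqrt (‖T U x‖ ^ 2) := (Real.sqrt_sq (norm_nonneg _)).symm
    _ = Real.sqrt (‖x‖ ^ 2) := by rw [h1]
    _ = ‖x‖ := Real.sqrt_sq (norm_nonneg _)

lemma trace_U_outer (U : Matrix (Fin n) (Fin n) ℂ) (x : Hn n) :
    (U * outer (x : Fin n → ℂ)).trace = inner ℂ x (T U x) := by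
  simp only [Matrix.trace, Matrix.diag, Matrix.mul_apply, outer, Matrix.of_apply,
    PiLp.inner_apply, RCLike.inner_apply, T, PiLp.toLp_apply, Matrix.mulVec, dotProduct]
  refine Finset.sum_congr rfl fun i _ => ?_
  rw [Finset.sum_mul]
  refine Finset.sum_congr rfl fun j _ => ?_
  ring

lemma outer_smul (u : ℂ) (hu : ‖u‖ = 1) (φ : Hn n) :
    outer ((u • φ : Hn n) : Fin n → ℂ) = outer (φ : Fin n → ℂ) := by
  ext i j
  show u * φ i * ((starRingEnd ℂ) (u * φ j)) = φ i * (starRingEnd ℂ) (φ j)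
  have : u * (starRingEnd ℂ) u = 1 := by
    rw [Complex.mul_conj]
    norm_cast
    rw [Complex.normSq_eq_norm_sq, hu]; norm_num
  rw [_root_.map_mul]
  calc u * φ i * ((starRingEnd ℂ) u * (starRingEnd ℂ) (φ j))
      = (u * (starRingEnd ℂ) u) * (φ i * (starRingEnd ℂ) (φ j)) := by ring
    _ = φ i * (starRingEnd ℂ) (φ j) := by rw [this, one_mul]

lemma exists_phase (ψ φ : Hn n) :
    ∃ u : ℂ, ‖u‖ = 1 ∧ (inner ℂ ψ (u • φ) : ℂ) = (‖(inner ℂ ψ φ : ℂ)‖ : ℂ) := by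
  set c : ℂ := inner ℂ ψ φ with hc
  by_cases h : c = 0
  · exact ⟨1, by norm_num, by rw [one_smul, ← hc, h]; simp [h]⟩
  · have habs : (‖c‖ : ℝ) ≠ 0 := by simpa using h
    refine ⟨(starRingEnd ℂ) c / (‖c‖ : ℂ), ?_, ?_⟩
    · rw [norm_div, RCLike.norm_conj, Complex.norm_real, Real.norm_eq_abs,
        abs_of_nonneg (norm_nonneg c), div_self habs]
    · rw [inner_smul_right, ← hc]
      rw [div_mul_eq_mul_div, mul_comm, Complex.mul_conj]
      rw [Complex.normSq_eq_norm_sq, pow_two]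
      push_cast
      rw [mul_div_assoc, div_self (by exact_mod_cast habs : ((‖c‖ : ℝ) : ℂ) ≠ 0), mul_one]

lemma pointwise_bound (U : Matrix (Fin n) (Fin n) ℂ) (hU : Uᴴ * U = 1)
    (ψ φ : Hn n) (hψ : ‖ψ‖ = 1) (hφ : ‖φ‖ = 1) :
    ((U * (outer (ψ : Fin n → ℂ) - outer (φ : Fin n → ℂ))).trace).re ≤ 2 * dFS ψ φ := by
  obtain ⟨u, hu, hip⟩ := exists_phase ψ φ
  set φ' : Hn n := u • φ with hφ'
  set r : ℝ := ‖(inner ℂ ψ φ : ℂ)‖ with hr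
  have hφ'n : ‖φ'‖ = 1 := by rw [hφ', norm_smul, hu, hφ, one_mul]
  have hr0 : 0 ≤ r := norm_nonneg _
  have hr1 : r ≤ 1 := by
    rw [hr]
    calc ‖(inner ℂ ψ φ : ℂ)‖ ≤ ‖ψ‖ * ‖φ‖ := norm_inner_le_norm ψ φ
      _ = 1 := by rw [hψ, hφ]; ring
  -- rewrite the trace
  rw [mul_sub, trace_sub, ← outer_smul u hu φ, trace_U_outer, trace_U_outer]
  -- key decomposition
  have hTsub : T U ψ - T U φ' = T U (ψ - φ') := by
    simp only [T, WithLp.ofLp_sub, Matrix.mulVec_sub, WithLp.toLp_sub]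
  have hdec : (inner ℂ ψ (T U ψ) : ℂ) - inner ℂ φ' (T U φ')
      = inner ℂ ψ (T U (ψ - φ')) + inner ℂ (ψ - φ') (T U φ') := by
    rw [← hTsub, inner_sub_right, inner_sub_left]
    ring
  rw [hdec]
  -- norm of difference
  have hinner_r : (inner ℂ ψ φ' : ℂ) = (r : ℂ) := hip
  have hnd : ‖ψ - φ'‖ = Real.sqrt (2 - 2 * r) := by
    have h2 : ‖ψ - φ'‖ ^ 2 = 2 - 2 * r := by
      rw [@norm_sub_sq ℂ, hψ, hφ'n, hinner_r]
      simp
      ring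
    calc ‖ψ - φ'‖ = Real.sqrt (‖ψ - φ'‖ ^ 2) := (Real.sqrt_sq (norm_nonneg _)).symm
      _ = Real.sqrt (2 - 2 * r) := by rw [h2]
  have hbound1 : ‖(inner ℂ ψ (T U (ψ - φ')) : ℂ)‖ ≤ ‖ψ - φ'‖ := by
    calc ‖(inner ℂ ψ (T U (ψ - φ')) : ℂ)‖ ≤ ‖ψ‖ * ‖T U (ψ - φ')‖ := norm_inner_le_norm _ _
      _ = ‖ψ - φ'‖ := by rw [hψ, one_mul, norm_T U hU]
  have hbound2 : ‖(inner ℂ (ψ - φ') (T U φ') : ℂ)‖ ≤ ‖ψ - φ'‖ := by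
    calc ‖(inner ℂ (ψ - φ') (T U φ') : ℂ)‖ ≤ ‖ψ - φ'‖ * ‖T U φ'‖ := norm_inner_le_norm _ _
      _ = ‖ψ - φ'‖ := by rw [norm_T U hU, hφ'n, mul_one]
  have hre : ((inner ℂ ψ (T U (ψ - φ')) : ℂ) + inner ℂ (ψ - φ') (T U φ')).re
      ≤ 2 * ‖ψ - φ'‖ := by
    rw [Complex.add_re]
    have a1 : ((inner ℂ ψ (T U (ψ - φ')) : ℂ)).re ≤ ‖(inner ℂ ψ (T U (ψ - φ')) : ℂ)‖ :=
      Complex.re_le_norm _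
    have a2 : ((inner ℂ (ψ - φ') (T U φ') : ℂ)).re ≤ ‖(inner ℂ (ψ - φ') (T U φ') : ℂ)‖ :=
      Complex.re_le_norm _
    linarith
  have harccos : Real.sqrt (2 - 2 * r) ≤ Real.arccos r := sqrt_le_arccos hr0 hr1
  have : dFS ψ φ = Real.arccos r := rfl
  rw [this]
  calc ((inner ℂ ψ (T U (ψ - φ')) : ℂ) + inner ℂ (ψ - φ') (T U φ')).re
      ≤ 2 * ‖ψ - φ'‖ := hre
    _ = 2 * Real.sqrt (2 - 2 * r) := by rw [hnd]
    _ ≤ 2 * Real.arccos r := by linarith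


example : CompactSpace (Sph n) := by infer_instance
example : CompactSpace (Sph n × Sph n) := by infer_instance
example : OpensMeasurableSpace (Sph n) := by infer_instance

lemma cont_coord (i : Fin n) : Continuous fun ψ : Sph n => (ψ : Hn n) i :=
  (continuous_apply i).comp ((PiLp.continuous_ofLp 2 _).comp continuous_subtype_val)

lemma integrable_cont {X E : Type*} [MeasurableSpace X] [TopologicalSpace X]
    [OpensMeasurableSpace X] [CompactSpace X] [T2Space X] [NormedAddCommGroup E]
    {f : X → E} (hf : Continuous f) (μ : Measure X) [IsFiniteMeasure μ] :
    Integrable f μ := by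
  have h := hf.continuousOn.integrableOn_compact (μ := μ) isCompact_univ
  rwa [integrableOn_univ] at h

lemma lambda_herm (μ : Measure (Sph n)) : (Lambda μ).IsHermitian := by
  refine Matrix.ext fun i j => ?_
  show (starRingEnd ℂ) ((Lambda μ) j i) = Lambda μ i j
  show (starRingEnd ℂ) (∫ ψ, ((ψ : Hn n) j * (starRingEnd ℂ) ((ψ : Hn n) i)) ∂μ) =
    ∫ ψ, ((ψ : Hn n) i * (starRingEnd ℂ) ((ψ : Hn n) j)) ∂μ
  rw [← integral_conj]
  congr 1
  funext ψ
  simp [mul_comm]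

lemma norm_sph (ψ : Sph n) : ‖(ψ : Hn n)‖ = 1 := by
  have := ψ.2
  rwa [mem_sphere_zero_iff_norm] at this

/-- the trace functional -/
def g (U : Matrix (Fin n) (Fin n) ℂ) (ψ : Hn n) : ℂ :=
  ∑ i, ∑ j, U i j * (ψ j * (starRingEnd ℂ) (ψ i))

lemma g_eq (U : Matrix (Fin n) (Fin n) ℂ) (ψ : Hn n) :
    g U ψ = (U * outer (ψ : Fin n → ℂ)).trace := by
  simp only [g, Matrix.trace, Matrix.diag, Matrix.mul_apply, outer, Matrix.of_apply]

lemma g_cont (U : Matrix (Fin n) (Fin n) ℂ) :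
    Continuous fun ψ : Sph n => g U (ψ : Hn n) := by
  refine continuous_finset_sum _ fun i _ => continuous_finset_sum _ fun j _ => ?_
  exact continuous_const.mul ((cont_coord j).mul (Complex.continuous_conj.comp (cont_coord i)))

lemma trace_U_Lambda (U : Matrix (Fin n) (Fin n) ℂ) (μ : Measure (Sph n))
    [IsFiniteMeasure μ] :
    (U * Lambda μ).trace = ∫ ψ, g U (ψ : Hn n) ∂μ := by
  have hint : ∀ i j : Fin n, Integrable
      (fun ψ : Sph n => U i j * ((ψ : Hn n) j * (starRingEnd ℂ) ((ψ : Hn n) i))) μ := by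
    intro i j
    exact integrable_cont (continuous_const.mul ((cont_coord j).mul
      (Complex.continuous_conj.comp (cont_coord i)))) μ
  calc (U * Lambda μ).trace
      = ∑ i, ∑ j, U i j * (Lambda μ) j i := by
        simp only [Matrix.trace, Matrix.diag, Matrix.mul_apply]
    _ = ∑ i, ∑ j, ∫ ψ, U i j * ((ψ : Hn n) j * (starRingEnd ℂ) ((ψ : Hn n) i)) ∂μ := by
        refine Finset.sum_congr rfl fun i _ => Finset.sum_congr rfl fun j _ => ?_
        show U i j * ∫ ψ, ((ψ : Hn n) j * (starRingEnd ℂ) ((ψ : Hn n) i)) ∂μ = _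
        rw [integral_const_mul]
    _ = ∑ i, ∫ ψ, ∑ j, U i j * ((ψ : Hn n) j * (starRingEnd ℂ) ((ψ : Hn n) i)) ∂μ := by
        refine Finset.sum_congr rfl fun i _ => ?_
        rw [integral_finset_sum _ fun j _ => hint i j]
    _ = ∫ ψ, g U (ψ : Hn n) ∂μ := by
        rw [← integral_finset_sum _ fun i (_ : i ∈ Finset.univ) =>
          integrable_finset_sum (μ := μ) Finset.univ fun j _ => hint i j]
        rfl

lemma main_ineq (μ ν : Measure (Sph n)) [IsProbabilityMeasure μ] [IsProbabilityMeasure ν]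
    (π : Measure (Sph n × Sph n)) [IsProbabilityMeasure π]
    (hπ1 : π.map Prod.fst = μ) (hπ2 : π.map Prod.snd = ν) :
    traceDist (Lambda μ) (Lambda ν) ≤ ∫ x, dFS (x.1 : Hn n) (x.2 : Hn n) ∂π := by
  set M := Lambda μ - Lambda ν with hMdef
  have hM : M.IsHermitian := (lambda_herm μ).sub (lambda_herm ν)
  obtain ⟨U, hU, hmsqrt⟩ := exists_unitary hM
  have key : traceDist (Lambda μ) (Lambda ν) = (1/2) * ((U * M).trace).re := by
    rw [traceDist, ← hMdef, hmsqrt]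
  rw [key]
  -- integrability over π
  have hg1 : Integrable (fun x : Sph n × Sph n => g U (x.1 : Hn n)) π :=
    integrable_cont ((g_cont U).comp continuous_fst) π
  have hg2 : Integrable (fun x : Sph n × Sph n => g U (x.2 : Hn n)) π :=
    integrable_cont ((g_cont U).comp continuous_snd) π
  have hdFScont : Continuous fun x : Sph n × Sph n => dFS (x.1 : Hn n) (x.2 : Hn n) := by
    have h1 : Continuous fun x : Sph n × Sph n => ((x.1 : Hn n), (x.2 : Hn n)) :=
      (continuous_subtype_val.comp continuous_fst).prodMk
        (continuous_subtype_val.comp continuous_snd)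
    exact Real.continuous_arccos.comp (continuous_norm.comp (continuous_inner.comp h1))
  have hdFSint : Integrable (fun x : Sph n × Sph n => dFS (x.1 : Hn n) (x.2 : Hn n)) π :=
    integrable_cont hdFScont π
  -- trace as an integral over π
  have hmap1 : ∫ ψ, g U (ψ : Hn n) ∂μ = ∫ x, g U (x.1 : Hn n) ∂π := by
    conv_lhs => rw [← hπ1]
    exact integral_map measurable_fst.aemeasurable (g_cont U).aestronglyMeasurable
  have hmap2 : ∫ ψ, g U (ψ : Hn n) ∂ν = ∫ x, g U (x.2 : Hn n) ∂π := by
    conv_lhs => rw [← hπ2]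
    exact integral_map measurable_snd.aemeasurable (g_cont U).aestronglyMeasurable
  have h3 : (U * M).trace = ∫ x, (g U (x.1 : Hn n) - g U (x.2 : Hn n)) ∂π := by
    rw [hMdef, mul_sub, trace_sub, trace_U_Lambda U μ, trace_U_Lambda U ν, hmap1, hmap2,
      ← integral_sub hg1 hg2]
  have h4 : ((U * M).trace).re = ∫ x, (g U (x.1 : Hn n) - g U (x.2 : Hn n)).re ∂π := by
    rw [h3]
    exact (integral_re (hg1.sub hg2)).symm
  have h5 : ∀ x : Sph n × Sph n,
      (g U (x.1 : Hn n) - g U (x.2 : Hn n)).re ≤ 2 * dFS (x.1 : Hn n) (x.2 : Hn n) := by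
    intro x
    have hb := pointwise_bound U hU (x.1 : Hn n) (x.2 : Hn n) (norm_sph x.1) (norm_sph x.2)
    rw [mul_sub, trace_sub, ← g_eq, ← g_eq] at hb
    exact hb
  have h6 : ∫ x, (g U (x.1 : Hn n) - g U (x.2 : Hn n)).re ∂π
      ≤ ∫ x, 2 * dFS (x.1 : Hn n) (x.2 : Hn n) ∂π :=
    integral_mono ((hg1.sub hg2).re) (hdFSint.const_mul 2) h5
  rw [h4]
  rw [integral_const_mul] at h6
  linarith


end Aux

/-- For any coupling `π` of Borel probability measures `μ, ν` on the unit sphere, the trace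
distance of the realized states is bounded by `∫∫ d_FS dπ`; consequently `Λ` is `1`-Lipschitz
from the `1`-Wasserstein distance (the infimum over couplings) to the trace distance. -/
theorem stmt14 {n : ℕ} (μ ν : Measure (Sph n))
    [IsProbabilityMeasure μ] [IsProbabilityMeasure ν]
    (π : Measure (Sph n × Sph n)) [IsProbabilityMeasure π]
    (hπ1 : π.map Prod.fst = μ) (hπ2 : π.map Prod.snd = ν) :
    traceDist (Lambda μ) (Lambda ν) ≤ ∫ x, dFS (x.1 : Hn n) (x.2 : Hn n) ∂π ∧
    traceDist (Lambda μ) (Lambda ν) ≤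
      ⨅ c : {c : Measure (Sph n × Sph n) //
        IsProbabilityMeasure c ∧ c.map Prod.fst = μ ∧ c.map Prod.snd = ν},
        ∫ x, dFS (x.1 : Hn n) (x.2 : Hn n) ∂(c : Measure (Sph n × Sph n)) := by
  have hne : Nonempty {c : Measure (Sph n × Sph n) //
      IsProbabilityMeasure c ∧ c.map Prod.fst = μ ∧ c.map Prod.snd = ν} :=
    ⟨⟨π, inferInstance, hπ1, hπ2⟩⟩
  refine ⟨Aux.main_ineq μ ν π hπ1 hπ2, le_ciInf fun c => ?_⟩
  obtain ⟨c, hc1, hc2, hc3⟩ := c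
  haveI := hc1
  exact Aux.main_ineq μ ν c hc2 hc3


end
end

section
/- Let ρ and σ be faithful density matrices on ℂⁿ with a common basis {ψ_1,…,ψ_n} and coefficients ρ_i > 0, σ_i > 0, so that ρ = Σ_i ρ_i |ψ_i⟩⟨ψ_i| and σ = Σ_i σ_i |ψ_i⟩⟨ψ_i|. Then for every continuous function f : (0, ∞) → ℝ, Tr[σ f(σ^{-1/2} ρ σ^{-1/2})] = Σ_{i=1}^n σ_i f(ρ_i/σ_i), where f is applied via the continuous functional calculus to the positive definite matrix σ^{-1/2} ρ σ^{-1/2}. (This identifies the maximal f-divergence D_f^max(ρ‖σ) with the classical f-divergence of the common-basis weight vectors.) -/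
open MeasureTheory Matrix
open scoped ENNReal ComplexOrder Classical

noncomputable section

/-- Conjugation by a matrix with two-sided adjoint inverse, as an `ℝ`-algebra hom. -/
def conjAH {n : ℕ} (B : Matrix (Fin n) (Fin n) ℂ) (h1 : B * Bᴴ = 1) (h2 : Bᴴ * B = 1) :
    Matrix (Fin n) (Fin n) ℂ →ₐ[ℝ] Matrix (Fin n) (Fin n) ℂ where
  toFun M := B * M * Bᴴ
  map_one' := by show B * 1 * Bᴴ = 1; rw [mul_one, h1]
  map_mul' M N := by
    show B * (M * N) * Bᴴ = B * M * Bᴴ * (B * N * Bᴴ)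
    have : B * M * Bᴴ * (B * N * Bᴴ) = B * M * (Bᴴ * B) * N * Bᴴ := by
      simp only [Matrix.mul_assoc]
    rw [this, h2, mul_one]
    simp only [Matrix.mul_assoc]
  map_zero' := by show B * 0 * Bᴴ = 0; simp
  map_add' M N := by
    show B * (M + N) * Bᴴ = B * M * Bᴴ + B * N * Bᴴ
    rw [mul_add, add_mul]
  commutes' r := by
    show B * algebraMap ℝ (Matrix (Fin n) (Fin n) ℂ) r * Bᴴ = _
    simp only [Algebra.algebraMap_eq_smul_one]
    rw [Matrix.mul_smul, mul_one, Matrix.smul_mul, h1]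

lemma mcfc_conj_diag {n : ℕ} (B : Matrix (Fin n) (Fin n) ℂ)
    (h1 : B * Bᴴ = 1) (h2 : Bᴴ * B = 1) (d : Fin n → ℝ) (f : ℝ → ℝ) :
    mcfc f (B * Matrix.diagonal (fun i => (d i : ℂ)) * Bᴴ)
      = B * Matrix.diagonal (fun i => ((f (d i) : ℝ) : ℂ)) * Bᴴ := by
  classical
  set D : Matrix (Fin n) (Fin n) ℂ := Matrix.diagonal (fun i => (d i : ℂ)) with hD
  set X : Matrix (Fin n) (Fin n) ℂ := B * D * Bᴴ with hX
  have hDH : D.IsHermitian := by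
    rw [Matrix.IsHermitian, hD, Matrix.diagonal_conjTranspose]
    congr 1
    funext i
    simp [Pi.star_def, Complex.conj_ofReal]
  have hXH : X.IsHermitian := by
    rw [Matrix.IsHermitian, hX]
    rw [Matrix.conjTranspose_mul, Matrix.conjTranspose_mul, Matrix.conjTranspose_conjTranspose,
      hDH.eq, Matrix.mul_assoc]
  -- the unitary element
  have hBmem : B ∈ unitary (Matrix (Fin n) (Fin n) ℂ) := by
    constructor
    · rw [Matrix.star_eq_conjTranspose]; exact h2
    · rw [Matrix.star_eq_conjTranspose]; exact h1
  have hspec : spectrum ℝ X ⊆ Set.range d := by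
    intro x hx
    have hXu : X = (⟨B, hBmem⟩ : unitary (Matrix (Fin n) (Fin n) ℂ)) * D *
        (star (⟨B, hBmem⟩ : unitary (Matrix (Fin n) (Fin n) ℂ)) :
          Matrix (Fin n) (Fin n) ℂ) := by
      simp [hX, Matrix.star_eq_conjTranspose]
    rw [hXu, Unitary.spectrum_star_right_conjugate] at hx
    rw [← spectrum.algebraMap_mem_iff ℂ, hD, spectrum_diagonal] at hx
    obtain ⟨i, hi⟩ := hx
    refine ⟨i, ?_⟩
    have hi2 : ((d i : ℝ) : ℂ) = ((x : ℝ) : ℂ) := by simpa using hi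
    exact_mod_cast hi2
  -- interpolating polynomial
  set s : Finset ℝ := Finset.image d Finset.univ with hs
  set g : Polynomial ℝ := Lagrange.interpolate s id f with hg
  have hnode : ∀ x ∈ Set.range d, Polynomial.eval x g = f x := by
    rintro x ⟨i, rfl⟩
    have hmem : d i ∈ s := Finset.mem_image_of_mem d (Finset.mem_univ i)
    exact Lagrange.eval_interpolate_at_node f (Set.injOn_id _) hmem
  have hXsa : IsSelfAdjoint X := hXH
  have key : mcfc f X = Polynomial.aeval X g := by
    rw [mcfc, dif_pos hXH, ← hXH.cfc_eq]
    rw [cfc_congr (g := fun x => Polynomial.eval x g)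
      (fun x hx => (hnode x (hspec hx)).symm)]
    exact cfc_polynomial g X hXsa
  rw [key]
  have hconj : Polynomial.aeval X g = conjAH B h1 h2 (Polynomial.aeval D g) := by
    have : X = conjAH B h1 h2 D := rfl
    rw [this, Polynomial.aeval_algHom_apply]
  rw [hconj]
  have hdiag : Polynomial.aeval D g
      = Matrix.diagonal (fun i => ((Polynomial.eval (d i) g : ℝ) : ℂ)) := by
    have hD' : D = Matrix.diagonalAlgHom ℝ (fun i => (d i : ℂ)) := rfl
    have hfun : (Polynomial.aeval (fun i : Fin n => ((d i : ℝ) : ℂ)) g)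
        = fun i => ((Polynomial.eval (d i) g : ℝ) : ℂ) := by
      funext i
      have h1' : (Polynomial.aeval (fun i : Fin n => ((d i : ℝ) : ℂ)) g) i
          = Polynomial.aeval ((d i : ℝ) : ℂ) g :=
        (Polynomial.aeval_algHom_apply (Pi.evalAlgHom ℝ (fun _ : Fin n => ℂ) i)
          (fun i => ((d i : ℝ) : ℂ)) g).symm
      have h2' : Polynomial.aeval ((d i : ℝ) : ℂ) g
          = ((Polynomial.eval (d i) g : ℝ) : ℂ) := by
        have hh : (((d i : ℝ)) : ℂ) = algebraMap ℝ ℂ (d i) := rfl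
        rw [hh, Polynomial.aeval_algebraMap_apply]
        simp [Polynomial.coe_aeval_eq_eval]
      exact h1'.trans h2'
    rw [hD', Polynomial.aeval_algHom_apply]
    simp only [Matrix.diagonalAlgHom_apply]
    rw [hfun]
  rw [hdiag]
  have : (fun i => ((Polynomial.eval (d i) g : ℝ) : ℂ))
      = fun i => ((f (d i) : ℝ) : ℂ) := by
    funext i
    rw [hnode (d i) ⟨i, rfl⟩]
  rw [this]
  rfl

/-- For faithful states `ρ, σ` in a common basis with positive weights `p, q`, and every
function `f` continuous on `(0, ∞)`, the maximal f-divergence satisfies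
`Tr[σ f(σ^{-1/2} ρ σ^{-1/2})] = Σ_i q_i f(p_i/q_i)`. -/
theorem stmt17 {n : ℕ} (ρ σ : Matrix (Fin n) (Fin n) ℂ)
    (hρ : ρ.PosDef) (hσ : σ.PosDef) (hρ1 : ρ.trace = 1) (hσ1 : σ.trace = 1)
    (ψ : Fin n → (Fin n → ℂ)) (hψn : ∀ i, nrm (ψ i) = 1) (hψli : LinearIndependent ℂ ψ)
    (p q : Fin n → ℝ)
    (hp : ∀ i, 0 < p i) (hps : ∑ i, p i = 1)
    (hq : ∀ i, 0 < q i) (hqs : ∑ i, q i = 1)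
    (hρeq : ρ = ∑ i, (p i : ℂ) • outer (ψ i))
    (hσeq : σ = ∑ i, (q i : ℂ) • outer (ψ i))
    (f : ℝ → ℝ) (hf : ContinuousOn f (Set.Ioi 0)) :
    (σ * mcfc f ((msqrt σ)⁻¹ * ρ * (msqrt σ)⁻¹)).trace
      = ((∑ i, q i * f (p i / q i) : ℝ) : ℂ) := by
  classical
  have hσps : σ.PosSemidef := hσ.posSemidef
  set S : Matrix (Fin n) (Fin n) ℂ := msqrt σ with hSdef2
  set U := hσps.1.eigenvectorUnitary with hU
  set Dq : Matrix (Fin n) (Fin n) ℂ :=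
    diagonal ((↑) ∘ Real.sqrt ∘ hσps.1.eigenvalues) with hDq
  have hSdef : S = (U : Matrix (Fin n) (Fin n) ℂ) * Dq * (star U : Matrix (Fin n) (Fin n) ℂ) :=
    dif_pos hσps
  have hSps : S.PosSemidef := by
    rw [hSdef, Matrix.star_eq_conjTranspose]
    apply Matrix.PosSemidef.mul_mul_conjTranspose_same
    rw [hDq, Matrix.posSemidef_diagonal_iff]
    intro i
    exact Complex.zero_le_real.mpr (Real.sqrt_nonneg _)
  have hSH : S.IsHermitian := hSps.isHermitian
  have hSS : S * S = σ := by
    have hu : (star U : Matrix (Fin n) (Fin n) ℂ) * (U : Matrix (Fin n) (Fin n) ℂ) = 1 :=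
      Unitary.coe_star_mul_self U
    have hDD : Dq * Dq = diagonal (RCLike.ofReal ∘ hσps.1.eigenvalues) := by
      rw [hDq, Matrix.diagonal_mul_diagonal]
      congr 1
      funext i
      simp only [Function.comp_apply]
      rw [← Complex.ofReal_mul, Real.mul_self_sqrt (hσps.eigenvalues_nonneg i)]
      rfl
    conv_rhs => rw [hσps.1.spectral_theorem, Unitary.conjStarAlgAut_apply]
    rw [hSdef, ← hDD]
    calc (U : Matrix (Fin n) (Fin n) ℂ) * Dq * (star U : Matrix (Fin n) (Fin n) ℂ) *
          ((U : Matrix (Fin n) (Fin n) ℂ) * Dq * (star U : Matrix (Fin n) (Fin n) ℂ))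
        = (U : Matrix (Fin n) (Fin n) ℂ) * Dq *
          ((star U : Matrix (Fin n) (Fin n) ℂ) * (U : Matrix (Fin n) (Fin n) ℂ)) * Dq *
          (star U : Matrix (Fin n) (Fin n) ℂ) := by simp only [Matrix.mul_assoc]
      _ = _ := by rw [hu, Matrix.mul_one]; simp only [Matrix.mul_assoc]; rfl
  have hSdetU : IsUnit S.det := by
    have hdd : S.det * S.det = σ.det := by rw [← Matrix.det_mul, hSS]
    have hσd : σ.det ≠ 0 := hσ.det_pos.ne'
    exact isUnit_iff_ne_zero.mpr (fun h => hσd (by rw [← hdd, h, zero_mul]))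
  have hS1 : S⁻¹ * S = 1 := Matrix.nonsing_inv_mul S hSdetU
  have hS2 : S * S⁻¹ = 1 := Matrix.mul_nonsing_inv S hSdetU
  have hSiH : (S⁻¹)ᴴ = S⁻¹ := by rw [Matrix.conjTranspose_nonsing_inv, hSH.eq]
  set A : Matrix (Fin n) (Fin n) ℂ := Matrix.of (fun i j => ψ j i) with hA
  have houter : ∀ c : Fin n → ℝ, (∑ i, (c i : ℂ) • outer (ψ i))
      = A * Matrix.diagonal (fun i => (c i : ℂ)) * Aᴴ := by
    intro c
    ext i j
    rw [Matrix.sum_apply, Matrix.mul_apply]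
    refine Finset.sum_congr rfl fun k _ => ?_
    rw [Matrix.mul_diagonal, Matrix.conjTranspose_apply]
    simp only [Matrix.smul_apply, outer, Matrix.of_apply, smul_eq_mul, hA, Matrix.star_apply,
      RCLike.star_def]
    ring
  set Qs : Matrix (Fin n) (Fin n) ℂ :=
    Matrix.diagonal (fun i => ((Real.sqrt (q i) : ℝ) : ℂ)) with hQs
  have hQsH : Qsᴴ = Qs := by
    rw [hQs, Matrix.diagonal_conjTranspose]
    congr 1
    funext i
    simp [Pi.star_def, Complex.conj_ofReal]
  have hQsQs : Qs * Qs = Matrix.diagonal (fun i => (q i : ℂ)) := by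
    have hfun : (fun i => ((Real.sqrt (q i) : ℝ) : ℂ) * ((Real.sqrt (q i) : ℝ) : ℂ))
        = fun i => ((q i : ℝ) : ℂ) := by
      funext i
      rw [← Complex.ofReal_mul, Real.mul_self_sqrt (hq i).le]
    rw [hQs, Matrix.diagonal_mul_diagonal, hfun]
  have hσA : σ = A * Matrix.diagonal (fun i => (q i : ℂ)) * Aᴴ := by rw [hσeq, houter]
  have hρA : ρ = A * Matrix.diagonal (fun i => (p i : ℂ)) * Aᴴ := by rw [hρeq, houter]
  set B : Matrix (Fin n) (Fin n) ℂ := S⁻¹ * A * Qs with hB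
  have hBH : Bᴴ = Qs * Aᴴ * S⁻¹ := by
    rw [hB, Matrix.conjTranspose_mul, Matrix.conjTranspose_mul, hQsH, hSiH, Matrix.mul_assoc]
  have h1 : B * Bᴴ = 1 := by
    rw [hB, hBH]
    calc S⁻¹ * A * Qs * (Qs * Aᴴ * S⁻¹)
        = S⁻¹ * (A * (Qs * Qs) * Aᴴ) * S⁻¹ := by simp only [Matrix.mul_assoc]
      _ = S⁻¹ * σ * S⁻¹ := by rw [hQsQs, ← hσA]
      _ = (S⁻¹ * S) * (S * S⁻¹) := by rw [← hSS]; simp only [Matrix.mul_assoc]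
      _ = 1 := by rw [hS1, hS2, one_mul]
  have h2 : Bᴴ * B = 1 := mul_eq_one_comm.mp h1
  have hQsD : Qs * Matrix.diagonal (fun i => ((p i / q i : ℝ) : ℂ)) * Qs
      = Matrix.diagonal (fun i => (p i : ℂ)) := by
    have hfun : (fun i => ((Real.sqrt (q i) : ℝ) : ℂ) * ((p i / q i : ℝ) : ℂ)
          * ((Real.sqrt (q i) : ℝ) : ℂ)) = fun i => ((p i : ℝ) : ℂ) := by
      funext i
      rw [← Complex.ofReal_mul, ← Complex.ofReal_mul]
      congr 1
      have hs := Real.mul_self_sqrt (hq i).le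
      have hqne := (hq i).ne'
      field_simp
      linear_combination p i * hs
    rw [hQs, Matrix.diagonal_mul_diagonal, Matrix.diagonal_mul_diagonal, hfun]
  have hXeq : S⁻¹ * ρ * S⁻¹ = B * Matrix.diagonal (fun i => ((p i / q i : ℝ) : ℂ)) * Bᴴ := by
    rw [hρA, hB, hBH]
    calc S⁻¹ * (A * Matrix.diagonal (fun i => (p i : ℂ)) * Aᴴ) * S⁻¹
        = S⁻¹ * (A * (Qs * Matrix.diagonal (fun i => ((p i / q i : ℝ) : ℂ)) * Qs) * Aᴴ) * S⁻¹ := by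
          rw [hQsD]
      _ = S⁻¹ * A * Qs * Matrix.diagonal (fun i => ((p i / q i : ℝ) : ℂ)) * (Qs * Aᴴ * S⁻¹) := by
          simp only [Matrix.mul_assoc]
  have hcfc := mcfc_conj_diag B h1 h2 (fun i => p i / q i) f
  rw [hXeq, hcfc]
  have hBσB : Bᴴ * σ * B = Qs * (Aᴴ * A) * Qs := by
    have hstep : Bᴴ * σ * B = Qs * Aᴴ * ((S⁻¹ * S) * ((S * S⁻¹) * (A * Qs))) := by
      rw [hBH, hB, ← hSS]
      simp only [Matrix.mul_assoc]
    rw [hstep, hS1, hS2, one_mul, one_mul]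
    simp only [Matrix.mul_assoc]
  have hip : ∀ i, (Aᴴ * A) i i = 1 := by
    intro i
    have hre : (Aᴴ * A) i i = ((∑ k, Complex.normSq (ψ i k) : ℝ) : ℂ) := by
      rw [Matrix.mul_apply]
      push_cast
      refine Finset.sum_congr rfl fun k _ => ?_
      simp only [Matrix.conjTranspose_apply, hA, Matrix.of_apply, Complex.star_def]
      exact Complex.normSq_eq_conj_mul_self.symm
    have hn := hψn i
    have hre2 : (ip (ψ i) (ψ i)).re = ∑ k, Complex.normSq (ψ i k) := by
      have : ip (ψ i) (ψ i) = ((∑ k, Complex.normSq (ψ i k) : ℝ) : ℂ) := by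
        rw [ip]
        push_cast
        refine Finset.sum_congr rfl fun k _ => ?_
        exact Complex.normSq_eq_conj_mul_self.symm
      rw [this, Complex.ofReal_re]
    rw [nrm, hre2] at hn
    have hnn : (0:ℝ) ≤ ∑ k, Complex.normSq (ψ i k) :=
      Finset.sum_nonneg fun k _ => Complex.normSq_nonneg _
    have hsum : (∑ k, Complex.normSq (ψ i k)) = 1 := by
      nlinarith [Real.sq_sqrt hnn]
    rw [hre, hsum, Complex.ofReal_one]
  calc (σ * (B * Matrix.diagonal (fun i => ((f (p i / q i) : ℝ) : ℂ)) * Bᴴ)).trace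
      = ((σ * B * Matrix.diagonal (fun i => ((f (p i / q i) : ℝ) : ℂ))) * Bᴴ).trace := by
        simp only [Matrix.mul_assoc]
    _ = (Bᴴ * (σ * B * Matrix.diagonal (fun i => ((f (p i / q i) : ℝ) : ℂ)))).trace :=
        (Matrix.trace_mul_comm _ _)
    _ = ((Bᴴ * σ * B) * Matrix.diagonal (fun i => ((f (p i / q i) : ℝ) : ℂ))).trace := by
        simp only [Matrix.mul_assoc]
    _ = ((Qs * (Aᴴ * A) * Qs) * Matrix.diagonal (fun i => ((f (p i / q i) : ℝ) : ℂ))).trace := by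
        rw [hBσB]
    _ = ∑ i, ((q i * f (p i / q i) : ℝ) : ℂ) := by
        rw [Matrix.trace]
        refine Finset.sum_congr rfl fun i _ => ?_
        rw [Matrix.diag_apply, Matrix.mul_diagonal, Matrix.mul_diagonal, Matrix.diagonal_mul,
          hip i, mul_one]
        rw [← Complex.ofReal_mul, Real.mul_self_sqrt (hq i).le, ← Complex.ofReal_mul]
    _ = ((∑ i, q i * f (p i / q i) : ℝ) : ℂ) := by push_cast; rfl

end
end
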